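/- arXiv:2408.12848 — 6 statements merged into one kernel-verified Lean document; each statement's English description precedes it below -/
import Mathlib

section
/- Let x, y, e be vectors in a complex Hilbert space H with ‖e‖ = 1, and let φ : [0,∞) → [0,∞) be a convex increasing continuous function with φ(0) = 0. Then φ(|⟨x, e⟩⟨e, y⟩|) ≤ (1/2)(φ(‖x‖‖y‖) + φ(|⟨x, y⟩|)). -/
open scoped InnerProductSpace
open Set Filter

variable {H : Type*} [NormedAddCommGroup H] [InnerProductSpace ℂ H] [CompleteSpace H]

/-- The numerical radius of a bounded linear operator. -/
noncomputable def numRad (T : H →L[ℂ] H) : ℝ :=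
  ⨆ x : {x : H // ‖x‖ = 1}, ‖(⟪T x, x⟫_ℂ)‖

/-- The absolute value `|T| = (T*T)^(1/2)` of a bounded linear operator. -/
noncomputable def opAbs (T : H →L[ℂ] H) : H →L[ℂ] H := CFC.sqrt (star T * T)

/-!
Reflecting `y` in the line through the unit vector `e` gives `R y = 2⟪e, y⟫e - y` with
`‖R y‖ = ‖y‖`, so Cauchy–Schwarz applied to `⟪x, R y⟫ = 2⟪x, e⟫⟪e, y⟫ - ⟪x, y⟫` yields
Buzano's inequality `|⟪x, e⟫⟪e, y⟫| ≤ (‖x‖‖y‖ + |⟪x, y⟫|) / 2`. Applying the monotone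
function `φ` and then its convexity at the midpoint finishes the proof.
-/

section Buzano

variable {𝕜 E : Type*} [RCLike 𝕜] [NormedAddCommGroup E] [InnerProductSpace 𝕜 E]

theorem inner_reflection_span_singleton {e : E} (he : ‖e‖ = 1) (x y : E) :
    ⟪x, (𝕜 ∙ e).reflection y⟫_𝕜 = 2 * (⟪x, e⟫_𝕜 * ⟪e, y⟫_𝕜) - ⟪x, y⟫_𝕜 := by
  rw [Submodule.reflection_apply, Submodule.starProjection_unit_singleton 𝕜 he, inner_sub_right,
    ← ofNat_smul_eq_nsmul (R := 𝕜), inner_smul_right, inner_smul_right, mul_comm ⟪e, y⟫_𝕜]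

theorem norm_inner_mul_inner_le_of_norm_eq_one {e : E} (he : ‖e‖ = 1) (x y : E) :
    ‖⟪x, e⟫_𝕜 * ⟪e, y⟫_𝕜‖ ≤ (‖x‖ * ‖y‖ + ‖⟪x, y⟫_𝕜‖) / 2 := by
  have hR : ‖⟪x, (𝕜 ∙ e).reflection y⟫_𝕜‖ ≤ ‖x‖ * ‖y‖ := by
    simpa using norm_inner_le_norm (𝕜 := 𝕜) x ((𝕜 ∙ e).reflection y)
  rw [inner_reflection_span_singleton he] at hR
  have htriangle := norm_sub_norm_le (2 * (⟪x, e⟫_𝕜 * ⟪e, y⟫_𝕜)) ⟪x, y⟫_𝕜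
  rw [norm_mul, RCLike.norm_two] at htriangle
  linarith

end Buzano

theorem ConvexOn.le_add_div_two_of_le_midpoint {s : Set ℝ} {φ : ℝ → ℝ} (hconv : ConvexOn ℝ s φ)
    (hmono : MonotoneOn φ s) {a b c : ℝ} (ha : a ∈ s) (hb : b ∈ s) (hc : c ∈ s)
    (habc : a ≤ (b + c) / 2) : φ a ≤ (φ b + φ c) / 2 := by
  have hhalf : (0 : ℝ) ≤ 1 / 2 := by norm_num
  have hmid : (1 / 2 : ℝ) • b + (1 / 2 : ℝ) • c = (b + c) / 2 := by
    simp only [smul_eq_mul]; ring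
  calc φ a ≤ φ ((1 / 2 : ℝ) • b + (1 / 2 : ℝ) • c) :=
        hmono ha (hconv.1 hb hc hhalf hhalf (add_halves 1)) (hmid ▸ habc)
    _ ≤ (1 / 2 : ℝ) • φ b + (1 / 2 : ℝ) • φ c := hconv.2 hb hc hhalf hhalf (add_halves 1)
    _ = (φ b + φ c) / 2 := by simp only [smul_eq_mul]; ring

theorem stmt0_general (φ : ℝ → ℝ)
    (hφconv : ConvexOn ℝ (Ici 0) φ) (hφmono : MonotoneOn φ (Ici 0))
    (x y e : H) (he : ‖e‖ = 1) :
    φ ‖⟪x, e⟫_ℂ * ⟪e, y⟫_ℂ‖ ≤ (1 / 2) * (φ (‖x‖ * ‖y‖) + φ ‖⟪x, y⟫_ℂ‖) := by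
  have h := hφconv.le_add_div_two_of_le_midpoint hφmono (norm_nonneg _)
    (mul_nonneg (norm_nonneg x) (norm_nonneg y)) (norm_nonneg _)
    (norm_inner_mul_inner_le_of_norm_eq_one (𝕜 := ℂ) he x y)
  linarith

theorem stmt0 (φ : ℝ → ℝ) (hφc : ContinuousOn φ (Ici 0))
    (hφconv : ConvexOn ℝ (Ici 0) φ) (hφmono : MonotoneOn φ (Ici 0)) (hφ0 : φ 0 = 0)
    (x y e : H) (he : ‖e‖ = 1) :
    φ ‖⟪x, e⟫_ℂ * ⟪e, y⟫_ℂ‖ ≤ (1 / 2) * (φ (‖x‖ * ‖y‖) + φ ‖⟪x, y⟫_ℂ‖) :=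
  stmt0_general φ hφconv hφmono x y e he
end

section
/- Let x, y, e be vectors in a complex Hilbert space H with ‖e‖ = 1. Then |⟨x, e⟩⟨e, y⟩| ≤ log((1/2)e^{‖x‖‖y‖} + (1/2)e^{|⟨x,y⟩|}) ≤ ‖x‖‖y‖. -/
open scoped InnerProductSpace
open Set Filter

variable {H : Type*} [NormedAddCommGroup H] [InnerProductSpace ℂ H] [CompleteSpace H]

/-- Buzano's inequality. -/
lemma buzano (x y e : H) (he : ‖e‖ = 1) :
    ‖⟪x, e⟫_ℂ * ⟪e, y⟫_ℂ‖ ≤ (‖x‖ * ‖y‖ + ‖⟪x, y⟫_ℂ‖) / 2 := by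
  set c : ℂ := 2 * ⟪e, y⟫_ℂ with hc
  have hnorm : ‖c • e - y‖ = ‖y‖ := by
    have h1 : ‖c • e - y‖ ^ 2 = ‖y‖ ^ 2 := by
      have := @norm_sub_sq ℂ _ _ _ _ (c • e) y
      rw [inner_smul_left, norm_smul, he] at this
      have hre : (RCLike.re ((starRingEnd ℂ) c * ⟪e, y⟫_ℂ) : ℝ)
          = 2 * ‖⟪e, y⟫_ℂ‖ ^ 2 := by
        have h : (starRingEnd ℂ) c * ⟪e, y⟫_ℂ = 2 * ((‖⟪e, y⟫_ℂ‖ : ℂ))^2 := by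
          rw [hc, map_mul (starRingEnd ℂ), mul_assoc, RCLike.conj_mul]
          norm_num
          exact Or.inl (map_ofNat (starRingEnd ℂ) 2)
        rw [h, ← Complex.ofReal_pow, ← Complex.ofReal_ofNat 2, ← Complex.ofReal_mul]
        exact RCLike.ofReal_re _
      rw [hre] at this
      have hcn : ‖c‖ = 2 * ‖⟪e, y⟫_ℂ‖ := by
        rw [hc]; simp
      rw [hcn] at this
      nlinarith [this]
    have h2 : (0:ℝ) ≤ ‖c • e - y‖ := norm_nonneg _
    nlinarith [norm_nonneg y]
  have hcs : ‖⟪x, c • e - y⟫_ℂ‖ ≤ ‖x‖ * ‖y‖ := by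
    calc ‖⟪x, c • e - y⟫_ℂ‖ ≤ ‖x‖ * ‖c • e - y‖ := norm_inner_le_norm x _
    _ = ‖x‖ * ‖y‖ := by rw [hnorm]
  have hexp : ⟪x, c • e - y⟫_ℂ = 2 * (⟪x, e⟫_ℂ * ⟪e, y⟫_ℂ) - ⟪x, y⟫_ℂ := by
    rw [inner_sub_right, inner_smul_right, hc]; ring
  have htri : 2 * ‖⟪x, e⟫_ℂ * ⟪e, y⟫_ℂ‖ ≤ ‖x‖ * ‖y‖ + ‖⟪x, y⟫_ℂ‖ := by
    have h2 : ‖(2:ℂ) * (⟪x, e⟫_ℂ * ⟪e, y⟫_ℂ)‖ ≤ ‖⟪x, c • e - y⟫_ℂ‖ + ‖⟪x, y⟫_ℂ‖ := by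
      calc ‖(2:ℂ) * (⟪x, e⟫_ℂ * ⟪e, y⟫_ℂ)‖
          = ‖(2 * (⟪x, e⟫_ℂ * ⟪e, y⟫_ℂ) - ⟪x, y⟫_ℂ) + ⟪x, y⟫_ℂ‖ := by ring_nf
        _ ≤ ‖2 * (⟪x, e⟫_ℂ * ⟪e, y⟫_ℂ) - ⟪x, y⟫_ℂ‖ + ‖⟪x, y⟫_ℂ‖ := norm_add_le _ _
        _ = ‖⟪x, c • e - y⟫_ℂ‖ + ‖⟪x, y⟫_ℂ‖ := by rw [hexp]
    rw [norm_mul, Complex.norm_ofNat] at h2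
    linarith
  linarith

theorem stmt1 (x y e : H) (he : ‖e‖ = 1) :
    ‖⟪x, e⟫_ℂ * ⟪e, y⟫_ℂ‖ ≤
      Real.log ((1 / 2) * Real.exp (‖x‖ * ‖y‖) + (1 / 2) * Real.exp ‖⟪x, y⟫_ℂ‖) ∧
    Real.log ((1 / 2) * Real.exp (‖x‖ * ‖y‖) + (1 / 2) * Real.exp ‖⟪x, y⟫_ℂ‖) ≤
      ‖x‖ * ‖y‖ := by
  set a := ‖x‖ * ‖y‖ with ha
  set b := ‖⟪x, y⟫_ℂ‖ with hb
  have hba : b ≤ a := norm_inner_le_norm x y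
  have hpos : 0 < (1 / 2) * Real.exp a + (1 / 2) * Real.exp b := by positivity
  have hbuz : ‖⟪x, e⟫_ℂ * ⟪e, y⟫_ℂ‖ ≤ (a + b) / 2 := buzano x y e he
  constructor
  · refine hbuz.trans ?_
    rw [Real.le_log_iff_exp_le hpos]
    have h1 : Real.exp ((a + b) / 2) ^ 2 = Real.exp a * Real.exp b := by
      rw [← Real.exp_add, ← Real.exp_nat_mul]
      ring_nf
    nlinarith [Real.exp_pos a, Real.exp_pos b, Real.exp_pos ((a+b)/2),
      sq_nonneg (Real.exp a - Real.exp b),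
      sq_nonneg (Real.exp ((a+b)/2) - ((1/2) * Real.exp a + (1/2) * Real.exp b))]
  · rw [Real.log_le_iff_le_exp hpos]
    have := Real.exp_le_exp.mpr hba
    linarith
end

section
/- Let x, y, e be vectors in a complex Hilbert space H with ‖e‖ = 1. Then |⟨x, e⟩⟨e, y⟩| ≤ sqrt(log((1/2)e^{‖x‖²‖y‖²} + (1/2)e^{|⟨x,y⟩|²})) ≤ ‖x‖‖y‖. -/
open scoped InnerProductSpace
open Set Filter

variable {H : Type*} [NormedAddCommGroup H] [InnerProductSpace ℂ H] [CompleteSpace H]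

/-! Buzano's inequality `|⟪x, e⟫⟪e, y⟫| ≤ (‖x‖‖y‖ + |⟪x, y⟫|) / 2` comes from writing
`2⟪x, e⟫⟪e, y⟫ = ⟪x, R y⟫ + ⟪x, y⟫`, where `R` is the reflection in the line through `e`, an
isometry. For the Orlicz function `φ t = exp (t ^ 2) - 1`, the quasi-arithmetic mean
`φ⁻¹ ((φ a + φ b) / 2)` of `a = ‖x‖‖y‖` and `b = |⟪x, y⟫|` lies between `(a + b) / 2` (convexity
of `exp` and of `t ↦ t ^ 2`) and `max a b = a` (monotonicity). -/

section Buzano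

variable {𝕜 E : Type*} [RCLike 𝕜] [NormedAddCommGroup E] [InnerProductSpace 𝕜 E]

theorem two_mul_inner_mul_inner_eq_inner_reflection_add {e : E} (he : ‖e‖ = 1) (x y : E) :
    2 * (⟪x, e⟫_𝕜 * ⟪e, y⟫_𝕜) = ⟪x, (𝕜 ∙ e).reflection y⟫_𝕜 + ⟪x, y⟫_𝕜 := by
  rw [Submodule.reflection_apply, Submodule.starProjection_unit_singleton 𝕜 he, inner_sub_right,
    two_smul, inner_add_right, inner_smul_right]
  ring

theorem two_mul_norm_inner_mul_inner_le {e : E} (he : ‖e‖ = 1) (x y : E) :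
    2 * ‖⟪x, e⟫_𝕜 * ⟪e, y⟫_𝕜‖ ≤ ‖x‖ * ‖y‖ + ‖⟪x, y⟫_𝕜‖ := by
  have h := congrArg norm (two_mul_inner_mul_inner_eq_inner_reflection_add (𝕜 := 𝕜) he x y)
  rw [norm_mul, RCLike.norm_two] at h
  calc 2 * ‖⟪x, e⟫_𝕜 * ⟪e, y⟫_𝕜‖
      ≤ ‖⟪x, (𝕜 ∙ e).reflection y⟫_𝕜‖ + ‖⟪x, y⟫_𝕜‖ := h ▸ norm_add_le _ _
    _ ≤ ‖x‖ * ‖(𝕜 ∙ e).reflection y‖ + ‖⟪x, y⟫_𝕜‖ := by gcongr; exact norm_inner_le_norm _ _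
    _ = ‖x‖ * ‖y‖ + ‖⟪x, y⟫_𝕜‖ := by rw [LinearIsometryEquiv.norm_map]

end Buzano

open Real

noncomputable def expSqMean (a b : ℝ) : ℝ :=
  √(log ((1 / 2) * exp (a ^ 2) + (1 / 2) * exp (b ^ 2)))

theorem add_div_two_le_expSqMean (a b : ℝ) : (a + b) / 2 ≤ expSqMean a b := by
  have hconv : exp (((a + b) / 2) ^ 2) ≤ (1 / 2) * exp (a ^ 2) + (1 / 2) * exp (b ^ 2) :=
    calc exp (((a + b) / 2) ^ 2) ≤ exp ((1 / 2) * a ^ 2 + (1 / 2) * b ^ 2) := by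
          gcongr; nlinarith [sq_nonneg (a - b)]
      _ ≤ _ := convexOn_exp.2 (Set.mem_univ _) (Set.mem_univ _) (by norm_num) (by norm_num)
          (by norm_num)
  calc (a + b) / 2 ≤ |(a + b) / 2| := le_abs_self _
    _ = √(((a + b) / 2) ^ 2) := (sqrt_sq_eq_abs _).symm
    _ ≤ expSqMean a b := sqrt_le_sqrt ((le_log_iff_exp_le (by positivity)).2 hconv)

theorem expSqMean_le {a b : ℝ} (hba : |b| ≤ a) : expSqMean a b ≤ a := by
  have hb : exp (b ^ 2) ≤ exp (a ^ 2) := exp_le_exp.2 (sq_le_sq' (abs_le.1 hba).1 (abs_le.1 hba).2)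
  have hlog : log ((1 / 2) * exp (a ^ 2) + (1 / 2) * exp (b ^ 2)) ≤ a ^ 2 :=
    (log_le_iff_le_exp (by positivity)).2 (by linarith)
  calc expSqMean a b ≤ √(a ^ 2) := sqrt_le_sqrt hlog
    _ = a := sqrt_sq ((abs_nonneg b).trans hba)

theorem stmt2 (x y e : H) (he : ‖e‖ = 1) :
    ‖⟪x, e⟫_ℂ * ⟪e, y⟫_ℂ‖ ≤
      Real.sqrt (Real.log ((1 / 2) * Real.exp (‖x‖ ^ 2 * ‖y‖ ^ 2) +
        (1 / 2) * Real.exp (‖⟪x, y⟫_ℂ‖ ^ 2))) ∧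
    Real.sqrt (Real.log ((1 / 2) * Real.exp (‖x‖ ^ 2 * ‖y‖ ^ 2) +
        (1 / 2) * Real.exp (‖⟪x, y⟫_ℂ‖ ^ 2))) ≤ ‖x‖ * ‖y‖ := by
  rw [← mul_pow, ← expSqMean]
  refine ⟨?_, expSqMean_le ((abs_norm _).trans_le (norm_inner_le_norm x y))⟩
  calc ‖⟪x, e⟫_ℂ * ⟪e, y⟫_ℂ‖ ≤ (‖x‖ * ‖y‖ + ‖⟪x, y⟫_ℂ‖) / 2 := by
        linarith [two_mul_norm_inner_mul_inner_le (𝕜 := ℂ) he x y]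
    _ ≤ expSqMean (‖x‖ * ‖y‖) ‖⟪x, y⟫_ℂ‖ := add_div_two_le_expSqMean _ _
end

section
/- Let T be a bounded linear operator on a complex Hilbert space H. Then w(T) ≤ log((1/2)e^{‖T‖} + (1/2)e^{‖T²‖^{1/2}}) ≤ ‖T‖. -/
open scoped InnerProductSpace
open Set Filter

variable {H : Type*} [NormedAddCommGroup H] [InnerProductSpace ℂ H] [CompleteSpace H]

/-!
The heart is Kittaneh's bound `w(T) ≤ (‖T‖ + ‖T²‖^{1/2}) / 2`; the logarithmic bounds then follow
from convexity and monotonicity of `exp`. For Kittaneh's bound, expanding `‖T*y + Tz‖²` gives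
`‖T*y + Tz‖² ≤ (‖T‖² + ‖T²‖)(‖y‖² + ‖z‖²)`, and taking `y = Tx`, `z = T*x` (so that
`‖Tx‖² + ‖T*x‖² = ⟪x, T*y + Tz⟫`) yields `‖Tx‖² + ‖T*x‖² ≤ (‖T‖² + ‖T²‖)‖x‖²`. With
`λ = ⟪Tx, x⟫`, the vector `λTx + λ̄T*x` has inner product `2|λ|²` with `x` and squared norm at most
`|λ|²(‖T‖² + 3‖T²‖)‖x‖²`, so `4|λ|² ≤ (‖T‖² + 3‖T²‖)‖x‖⁴ ≤ (‖T‖ + ‖T²‖^{1/2})²‖x‖⁴`.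
-/

open scoped InnerProduct ComplexConjugate
open RCLike ContinuousLinearMap

lemma sqrt_norm_mul_self_le_norm {R : Type*} [NonUnitalSeminormedRing R] (a : R) :
    √‖a * a‖ ≤ ‖a‖ :=
  Real.sqrt_le_iff.mpr ⟨norm_nonneg a, sq ‖a‖ ▸ norm_mul_le a a⟩

section Kittaneh

variable {𝕜 E : Type*} [RCLike 𝕜] [NormedAddCommGroup E] [InnerProductSpace 𝕜 E] [CompleteSpace E]
  (T : E →L[𝕜] E)

lemma norm_adjoint_apply_add_apply_sq_le (y z : E) :
    ‖(T†) y + T z‖ ^ 2 ≤ (‖T‖ ^ 2 + ‖T * T‖) * (‖y‖ ^ 2 + ‖z‖ ^ 2) := by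
  have hy : ‖(T†) y‖ ≤ ‖T‖ * ‖y‖ := by simpa using (T†).le_opNorm y
  have hz : ‖T z‖ ≤ ‖T‖ * ‖z‖ := T.le_opNorm z
  have hcross : re ⟪(T†) y, T z⟫_𝕜 ≤ ‖T * T‖ * (‖y‖ * ‖z‖) := calc
    re ⟪(T†) y, T z⟫_𝕜 ≤ ‖⟪y, (T * T) z⟫_𝕜‖ := by
      rw [adjoint_inner_left]; exact re_le_norm _
    _ ≤ ‖y‖ * (‖T * T‖ * ‖z‖) := (norm_inner_le_norm _ _).trans
      (mul_le_mul_of_nonneg_left ((T * T).le_opNorm z) (norm_nonneg _))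
    _ = ‖T * T‖ * (‖y‖ * ‖z‖) := by ring
  rw [norm_add_sq (𝕜 := 𝕜)]
  nlinarith [sq_nonneg (‖y‖ - ‖z‖), norm_nonneg (T * T),
    mul_le_mul hy hy (norm_nonneg _) (by positivity), mul_le_mul hz hz (norm_nonneg _) (by positivity)]

lemma norm_apply_sq_add_norm_adjoint_apply_sq_le (x : E) :
    ‖T x‖ ^ 2 + ‖(T†) x‖ ^ 2 ≤ (‖T‖ ^ 2 + ‖T * T‖) * ‖x‖ ^ 2 := by
  set s := ‖T x‖ ^ 2 + ‖(T†) x‖ ^ 2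
  set v := (T†) (T x) + T ((T†) x)
  have hs : s ≤ ‖x‖ * ‖v‖ := calc
    s = re ⟪x, v⟫_𝕜 := by
      rw [inner_add_right, adjoint_inner_right, ← adjoint_inner_left T ((T†) x) x, map_add,
        inner_self_eq_norm_sq, inner_self_eq_norm_sq]
    _ ≤ ‖x‖ * ‖v‖ := (re_le_norm _).trans (norm_inner_le_norm _ _)
  have hv : ‖v‖ ^ 2 ≤ (‖T‖ ^ 2 + ‖T * T‖) * s := norm_adjoint_apply_add_apply_sq_le T _ _
  have hs0 : 0 ≤ s := by positivity
  have hss : s * s ≤ (‖T‖ ^ 2 + ‖T * T‖) * ‖x‖ ^ 2 * s := by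
    nlinarith [mul_le_mul hs hs hs0 (by positivity), mul_le_mul_of_nonneg_left hv (sq_nonneg ‖x‖)]
  rcases hs0.eq_or_lt with hs0 | hs0
  · rw [← hs0]; positivity
  · exact le_of_mul_le_mul_right hss hs0

lemma norm_smul_apply_add_conj_smul_adjoint_apply_sq_le (μ : 𝕜) (x : E) :
    ‖μ • T x + conj μ • (T†) x‖ ^ 2 ≤
      ‖μ‖ ^ 2 * (‖T x‖ ^ 2 + ‖(T†) x‖ ^ 2 + 2 * ‖T * T‖ * ‖x‖ ^ 2) := by
  have hcross : re ⟪μ • T x, conj μ • (T†) x⟫_𝕜 ≤ ‖μ‖ ^ 2 * (‖T * T‖ * ‖x‖ ^ 2) := calc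
    re ⟪μ • T x, conj μ • (T†) x⟫_𝕜 ≤ ‖conj μ * conj μ * ⟪(T * T) x, x⟫_𝕜‖ := by
      rw [inner_smul_left, inner_smul_right, adjoint_inner_right, ← mul_assoc]
      exact re_le_norm _
    _ ≤ ‖μ‖ ^ 2 * (‖T * T‖ * ‖x‖ ^ 2) := by
      rw [norm_mul, norm_mul, RCLike.norm_conj, ← sq]
      gcongr
      calc ‖⟪(T * T) x, x⟫_𝕜‖ ≤ ‖(T * T) x‖ * ‖x‖ := norm_inner_le_norm _ _
        _ ≤ ‖T * T‖ * ‖x‖ * ‖x‖ := by gcongr; exact (T * T).le_opNorm x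
        _ = ‖T * T‖ * ‖x‖ ^ 2 := by ring
  rw [norm_add_sq (𝕜 := 𝕜), norm_smul, norm_smul, RCLike.norm_conj]
  nlinarith

lemma norm_inner_apply_self_sq_le (x : E) :
    ‖⟪T x, x⟫_𝕜‖ ^ 2 ≤ (‖T‖ ^ 2 + 3 * ‖T * T‖) / 4 * ‖x‖ ^ 4 := by
  set c := ⟪T x, x⟫_𝕜
  set v := c • T x + conj c • (T†) x
  have hv : 2 * ‖c‖ ^ 2 ≤ ‖v‖ * ‖x‖ := calc
    2 * ‖c‖ ^ 2 = re ⟪v, x⟫_𝕜 := by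
      rw [inner_add_left, inner_smul_left, inner_smul_left, adjoint_inner_left, conj_conj,
        ← inner_conj_symm x (T x), RCLike.conj_mul, RCLike.mul_conj, ← two_mul]
      norm_cast
    _ ≤ ‖v‖ * ‖x‖ := (re_le_norm _).trans (norm_inner_le_norm _ _)
  have hv2 := norm_smul_apply_add_conj_smul_adjoint_apply_sq_le T c x
  have hs := norm_apply_sq_add_norm_adjoint_apply_sq_le T x
  have key : ‖c‖ ^ 2 * (4 * ‖c‖ ^ 2) ≤ ‖c‖ ^ 2 * ((‖T‖ ^ 2 + 3 * ‖T * T‖) * ‖x‖ ^ 4) := by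
    nlinarith [mul_le_mul hv hv (by positivity) (by positivity),
      mul_le_mul_of_nonneg_right hv2 (sq_nonneg ‖x‖),
      mul_le_mul_of_nonneg_left hs (by positivity : 0 ≤ ‖c‖ ^ 2 * ‖x‖ ^ 2)]
  rcases (sq_nonneg ‖c‖).eq_or_lt with hc | hc
  · rw [← hc]; positivity
  · linarith [le_of_mul_le_mul_left key hc]

lemma norm_inner_apply_self_le (x : E) :
    ‖⟪T x, x⟫_𝕜‖ ≤ (‖T‖ + √‖T * T‖) / 2 * ‖x‖ ^ 2 := by
  have hba := sqrt_norm_mul_self_le_norm T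
  set b := √‖T * T‖
  have hb2 : b ^ 2 = ‖T * T‖ := Real.sq_sqrt (norm_nonneg _)
  refine le_of_sq_le_sq ?_ (by positivity)
  calc ‖⟪T x, x⟫_𝕜‖ ^ 2 ≤ (‖T‖ ^ 2 + 3 * ‖T * T‖) / 4 * ‖x‖ ^ 4 :=
      norm_inner_apply_self_sq_le T x
    _ ≤ ((‖T‖ + b) / 2 * ‖x‖ ^ 2) ^ 2 := by
      rw [← hb2]
      nlinarith [mul_nonneg (mul_nonneg (Real.sqrt_nonneg ‖T * T‖) (sub_nonneg.2 hba))
        (pow_nonneg (norm_nonneg x) 4)]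

end Kittaneh

lemma numRad_le_half_norm_add_sqrt_norm_mul_self (T : H →L[ℂ] H) :
    numRad T ≤ (‖T‖ + √‖T * T‖) / 2 :=
  Real.iSup_le (fun x => by simpa [x.2] using norm_inner_apply_self_le T x) (by positivity)

theorem stmt4 (T : H →L[ℂ] H) :
    numRad T ≤
      Real.log ((1 / 2) * Real.exp ‖T‖ + (1 / 2) * Real.exp (Real.sqrt ‖T * T‖)) ∧
    Real.log ((1 / 2) * Real.exp ‖T‖ + (1 / 2) * Real.exp (Real.sqrt ‖T * T‖)) ≤
      ‖T‖ := by
  have hpos : 0 < (1 / 2) * Real.exp ‖T‖ + (1 / 2) * Real.exp √‖T * T‖ := by positivity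
  have hexp_convex : Real.exp ((1 / 2) * ‖T‖ + (1 / 2) * √‖T * T‖) ≤
      (1 / 2) * Real.exp ‖T‖ + (1 / 2) * Real.exp √‖T * T‖ := by
    simpa using convexOn_exp.2 (Set.mem_univ ‖T‖) (Set.mem_univ √‖T * T‖)
      (by norm_num : (0 : ℝ) ≤ 1 / 2) (by norm_num : (0 : ℝ) ≤ 1 / 2) (by norm_num)
  refine ⟨?_, (Real.log_le_iff_le_exp hpos).2 ?_⟩
  · calc numRad T ≤ (‖T‖ + √‖T * T‖) / 2 := numRad_le_half_norm_add_sqrt_norm_mul_self T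
      _ = (1 / 2) * ‖T‖ + (1 / 2) * √‖T * T‖ := by ring
      _ ≤ _ := (Real.le_log_iff_exp_le hpos).2 hexp_convex
  · linarith [Real.exp_le_exp.2 (sqrt_norm_mul_self_le_norm T)]
end

section
/- Let T be a bounded linear operator on a complex Hilbert space H, φ an Orlicz function, and α ∈ [0,1]. Then φ(w²(T)) ≤ (α/2) φ(w(T²)) + ‖(α/4) φ(|T|²) + (1 − 3α/4) φ(|T*|²)‖. -/
open scoped InnerProductSpace
open Set Filter

variable {H : Type*} [NormedAddCommGroup H] [InnerProductSpace ℂ H] [CompleteSpace H]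

/-!
For a unit vector `x` put `s = |⟪T x, x⟫|`, `a = ‖T x‖`, `b = ‖T* x‖` and `n = |⟪T² x, x⟫|`.
Buzano's inequality `|⟪u, x⟫ ⟪x, v⟫| ≤ (|⟪u, v⟫| + ‖u‖ ‖v‖) / 2` gives `s² ≤ (n + a b) / 2`, and
`s ≤ b`, so `s² ≤ α (n + a b) / 2 + (1 - α) b²`. Monotonicity and convexity of `φ`, together
with `a b ≤ (a² + b²) / 2`, turn this into `φ (s²) ≤ α/2 φ (n) + α/4 φ (a²) + (1 - 3α/4) φ (b²)`.
Since `a² = ⟪|T|² x, x⟫` and `b² = ⟪|T*|² x, x⟫`, Jensen's inequality `φ ⟪A x, x⟫ ≤ ⟪φ(A) x, x⟫`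
for positive `A` bounds the last two terms by the quadratic form of the operator whose norm
appears on the right. Taking the supremum over `x` is allowed because `t ↦ φ (t²)` is continuous.
-/

open RCLike

section InnerProductSpace

variable {𝕜 E : Type*} [RCLike 𝕜] [NormedAddCommGroup E] [InnerProductSpace 𝕜 E]

theorem norm_inner_mul_inner_le {e : E} (he : ‖e‖ = 1) (u v : E) :
    ‖⟪u, e⟫_𝕜 * ⟪e, v⟫_𝕜‖ ≤ (‖⟪u, v⟫_𝕜‖ + ‖u‖ * ‖v‖) / 2 := by
  set R := (𝕜 ∙ e).reflection
  have hR : ⟪u, R v⟫_𝕜 = 2 * (⟪u, e⟫_𝕜 * ⟪e, v⟫_𝕜) - ⟪u, v⟫_𝕜 := by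
    rw [Submodule.reflection_apply, Submodule.starProjection_unit_singleton 𝕜 he,
      inner_sub_right, two_smul, inner_add_right, inner_smul_right]
    ring
  have htwice : 2 * ‖⟪u, e⟫_𝕜 * ⟪e, v⟫_𝕜‖ ≤ ‖⟪u, v⟫_𝕜‖ + ‖u‖ * ‖v‖ := calc
    2 * ‖⟪u, e⟫_𝕜 * ⟪e, v⟫_𝕜‖ = ‖⟪u, v⟫_𝕜 + ⟪u, R v⟫_𝕜‖ := by
      rw [hR, add_sub_cancel, norm_mul (2 : 𝕜), RCLike.norm_two]
    _ ≤ ‖⟪u, v⟫_𝕜‖ + ‖u‖ * ‖R v‖ :=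
      (norm_add_le _ _).trans (by gcongr; exact norm_inner_le_norm _ _)
    _ = ‖⟪u, v⟫_𝕜‖ + ‖u‖ * ‖v‖ := by rw [LinearIsometryEquiv.norm_map]
  linarith

namespace ContinuousLinearMap

theorem re_inner_apply_le_of_le {A B : E →L[𝕜] E} (hAB : A ≤ B) (x : E) :
    re ⟪A x, x⟫_𝕜 ≤ re ⟪B x, x⟫_𝕜 := by
  have := ((le_def A B).1 hAB).re_inner_nonneg_left x
  rwa [sub_apply, inner_sub_left, map_sub, sub_nonneg] at this

theorem re_inner_apply_le_opNorm (A : E →L[𝕜] E) {x : E} (hx : ‖x‖ = 1) :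
    re ⟪A x, x⟫_𝕜 ≤ ‖A‖ := calc
  re ⟪A x, x⟫_𝕜 ≤ ‖A x‖ * ‖x‖ := re_inner_le_norm _ _
  _ ≤ ‖A‖ * ‖x‖ * ‖x‖ := by gcongr; exact A.le_opNorm x
  _ = ‖A‖ := by rw [hx, mul_one, mul_one]

end ContinuousLinearMap

end InnerProductSpace

namespace ConvexOn

variable {S : Set ℝ} {φ : ℝ → ℝ} {x y : ℝ}

theorem add_derivWithin_mul_sub_le (hφ : ConvexOn ℝ S φ) (hx : x ∈ interior S) (hy : y ∈ S) :
    φ x + derivWithin φ (Ioi x) x * (y - x) ≤ φ y := by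
  rcases lt_trichotomy x y with hxy | rfl | hyx
  · have := hφ.rightDeriv_le_slope_of_mem_interior hx hy hxy
    rw [slope_def_field, le_div_iff₀ (sub_pos.2 hxy)] at this
    linarith
  · simp
  · have := (hφ.slope_le_leftDeriv_of_mem_interior hy hx hyx).trans
      (hφ.leftDeriv_le_rightDeriv_of_mem_interior hx)
    rw [slope_def_field, div_le_iff₀ (sub_pos.2 hyx)] at this
    linarith

theorem exists_add_mul_sub_le_of_monotoneOn (hφ : ConvexOn ℝ (Ici 0) φ)
    (hmono : MonotoneOn φ (Ici 0)) (hx : 0 ≤ x) :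
    ∃ m, ∀ t ∈ Ici (0 : ℝ), φ x + m * (t - x) ≤ φ t := by
  rcases hx.eq_or_lt with rfl | hx
  · exact ⟨0, fun t ht => by simpa using hmono self_mem_Ici ht ht⟩
  · exact ⟨_, fun t ht => hφ.add_derivWithin_mul_sub_le (by simpa using hx) ht⟩

theorem apply_add_div_two_le (hφ : ConvexOn ℝ (Ici 0) φ) (hx : 0 ≤ x) (hy : 0 ≤ y) :
    φ ((x + y) / 2) ≤ (φ x + φ y) / 2 := by
  have := hφ.2 (mem_Ici.2 hx) (mem_Ici.2 hy) (by norm_num : (0 : ℝ) ≤ 1 / 2)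
    (by norm_num : (0 : ℝ) ≤ 1 / 2) (by norm_num)
  simpa only [smul_eq_mul, one_div_mul_eq_div, add_div] using this

theorem apply_mul_le_of_monotoneOn (hφ : ConvexOn ℝ (Ici 0) φ) (hmono : MonotoneOn φ (Ici 0))
    (hx : 0 ≤ x) (hy : 0 ≤ y) : φ (x * y) ≤ (φ (x ^ 2) + φ (y ^ 2)) / 2 := calc
  φ (x * y) ≤ φ ((x ^ 2 + y ^ 2) / 2) :=
    hmono (mem_Ici.2 (by positivity)) (mem_Ici.2 (by positivity))
      (by nlinarith [sq_nonneg (x - y)])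
  _ ≤ (φ (x ^ 2) + φ (y ^ 2)) / 2 := hφ.apply_add_div_two_le (sq_nonneg x) (sq_nonneg y)

theorem apply_sq_le_of_sq_le_add_mul_div_two (hφ : ConvexOn ℝ (Ici 0) φ)
    (hmono : MonotoneOn φ (Ici 0)) {α s a b n : ℝ} (hα0 : 0 ≤ α) (hα1 : α ≤ 1) (hs : 0 ≤ s)
    (ha : 0 ≤ a) (hb : 0 ≤ b) (hn : 0 ≤ n) (hsb : s ≤ b) (hsq : s ^ 2 ≤ (n + a * b) / 2) :
    φ (s ^ 2) ≤ α / 2 * φ n + α / 4 * φ (a ^ 2) + (1 - 3 * α / 4) * φ (b ^ 2) := by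
  have hu : 0 ≤ (n + a * b) / 2 := by positivity
  have hcomb : s ^ 2 ≤ α * ((n + a * b) / 2) + (1 - α) * b ^ 2 := by
    nlinarith [pow_le_pow_left₀ hs hsb 2]
  have hconvex : φ (α * ((n + a * b) / 2) + (1 - α) * b ^ 2)
      ≤ α * φ ((n + a * b) / 2) + (1 - α) * φ (b ^ 2) :=
    hφ.2 (mem_Ici.2 hu) (mem_Ici.2 (sq_nonneg b)) hα0 (by linarith) (by ring)
  have hmid := hφ.apply_add_div_two_le hn (mul_nonneg ha hb)
  have hab := hφ.apply_mul_le_of_monotoneOn hmono ha hb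
  have hs2 := hmono (mem_Ici.2 (sq_nonneg s)) (mem_Ici.2 (by positivity)) hcomb
  nlinarith

end ConvexOn

theorem ContinuousOn.apply_ciSup_le {ι : Type*} [Nonempty ι] {f : ι → ℝ} {s : Set ℝ}
    {ψ : ℝ → ℝ} {R : ℝ} (hψ : ContinuousOn ψ s) (hs : IsClosed s) (hfs : ∀ i, f i ∈ s)
    (hf : BddAbove (range f)) (h : ∀ i, ψ (f i) ≤ R) : ψ (⨆ i, f i) ≤ R := by
  have hclosed : IsClosed (s ∩ ψ ⁻¹' Iic R) := hψ.preimage_isClosed_of_isClosed hs isClosed_Iic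
  have hsub : range f ⊆ s ∩ ψ ⁻¹' Iic R := range_subset_iff.2 fun i => ⟨hfs i, h i⟩
  exact (hclosed.closure_subset_iff.2 hsub (csSup_mem_closure (range_nonempty f) hf)).2

section

omit [CompleteSpace H]

namespace ContinuousLinearMap

theorem re_inner_algebraMap_add_smul_apply (c m : ℝ) (A : H →L[ℂ] H) {x : H} (hx : ‖x‖ = 1) :
    re ⟪(algebraMap ℝ (H →L[ℂ] H) c + m • A) x, x⟫_ℂ = c + m * re ⟪A x, x⟫_ℂ := by
  simp [Algebra.algebraMap_eq_smul_one, hx]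

theorem re_inner_smul_add_smul_apply (a b : ℝ) (A B : H →L[ℂ] H) (x : H) :
    re ⟪(a • A + b • B) x, x⟫_ℂ = a * re ⟪A x, x⟫_ℂ + b * re ⟪B x, x⟫_ℂ := by
  simp

end ContinuousLinearMap

theorem bddAbove_range_norm_inner_apply (T : H →L[ℂ] H) :
    BddAbove (range fun x : {x : H // ‖x‖ = 1} => ‖⟪T x, x⟫_ℂ‖) := by
  refine ⟨‖T‖, ?_⟩
  rintro _ ⟨x, rfl⟩
  calc ‖⟪T x, x⟫_ℂ‖ ≤ ‖T x‖ * ‖(x : H)‖ := norm_inner_le_norm _ _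
    _ ≤ ‖T‖ * ‖(x : H)‖ * ‖(x : H)‖ := by gcongr; exact T.le_opNorm _
    _ = ‖T‖ := by rw [x.2, mul_one, mul_one]

theorem norm_inner_apply_le_numRad (T : H →L[ℂ] H) {x : H} (hx : ‖x‖ = 1) :
    ‖⟪T x, x⟫_ℂ‖ ≤ numRad T :=
  le_ciSup (bddAbove_range_norm_inner_apply T) ⟨x, hx⟩

theorem numRad_nonneg (T : H →L[ℂ] H) : 0 ≤ numRad T :=
  Real.iSup_nonneg fun _ => norm_nonneg _

theorem apply_numRad_le {T : H →L[ℂ] H} {ψ : ℝ → ℝ} {R : ℝ} (hψ : ContinuousOn ψ (Ici 0))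
    (h0 : ψ 0 ≤ R) (h : ∀ x : H, ‖x‖ = 1 → ψ ‖⟪T x, x⟫_ℂ‖ ≤ R) : ψ (numRad T) ≤ R := by
  cases isEmpty_or_nonempty {x : H // ‖x‖ = 1}
  · rwa [numRad, Real.iSup_of_isEmpty]
  · exact hψ.apply_ciSup_le isClosed_Ici (fun _ => norm_nonneg _)
      (bddAbove_range_norm_inner_apply T) fun x => h x x.2

end

namespace ContinuousLinearMap

/-- The supporting line of `φ` at `⟪A x, x⟫` lies below `φ` on the spectrum of `A`, and the
functional calculus turns this into an operator inequality. -/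
theorem apply_re_inner_le_re_inner_cfc {A : H →L[ℂ] H} (hA : 0 ≤ A) {φ : ℝ → ℝ}
    (hφc : ContinuousOn φ (Ici 0)) (hφ : ConvexOn ℝ (Ici 0) φ) (hmono : MonotoneOn φ (Ici 0))
    {x : H} (hx : ‖x‖ = 1) :
    φ (re ⟪A x, x⟫_ℂ) ≤ re ⟪cfc φ A x, x⟫_ℂ := by
  set s := re ⟪A x, x⟫_ℂ
  have hspec : spectrum ℝ A ⊆ Ici 0 := fun t ht => spectrum_nonneg_of_nonneg hA ht
  obtain ⟨m, hm⟩ := hφ.exists_add_mul_sub_le_of_monotoneOn hmono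
    (((nonneg_iff_isPositive A).1 hA).re_inner_nonneg_left x)
  have hline : cfc (fun t => (φ s - m * s) + m * t) A ≤ cfc φ A :=
    cfc_mono (fun t ht => by linarith [hm t (hspec ht)]) (hg := hφc.mono hspec)
  rw [cfc_const_add (φ s - m * s) (m * ·) A, cfc_const_mul_id m A] at hline
  have := re_inner_apply_le_of_le hline x
  rw [re_inner_algebraMap_add_smul_apply _ _ _ hx] at this
  linarith

theorem norm_inner_apply_sq_le (T : H →L[ℂ] H) {x : H} (hx : ‖x‖ = 1) :
    ‖⟪T x, x⟫_ℂ‖ ^ 2 ≤ (‖⟪(T * T) x, x⟫_ℂ‖ + ‖T x‖ * ‖star T x‖) / 2 := by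
  have h := norm_inner_mul_inner_le (𝕜 := ℂ) hx (T x) (star T x)
  rwa [star_eq_adjoint, adjoint_inner_right, adjoint_inner_right, ← mul_apply_eq_comp,
    norm_mul, ← sq] at h

theorem norm_inner_apply_le_norm_star_apply (T : H →L[ℂ] H) {x : H} (hx : ‖x‖ = 1) :
    ‖⟪T x, x⟫_ℂ‖ ≤ ‖star T x‖ := calc
  ‖⟪T x, x⟫_ℂ‖ = ‖⟪x, star T x⟫_ℂ‖ := by rw [star_eq_adjoint, adjoint_inner_right]
  _ ≤ ‖x‖ * ‖star T x‖ := norm_inner_le_norm _ _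
  _ = ‖star T x‖ := by rw [hx, one_mul]

end ContinuousLinearMap

theorem opAbs_sq (T : H →L[ℂ] H) : opAbs T ^ 2 = star T * T :=
  CFC.sq_sqrt _ (star_mul_self_nonneg T)

theorem opAbs_sq_nonneg (T : H →L[ℂ] H) : 0 ≤ opAbs T ^ 2 :=
  opAbs_sq T ▸ star_mul_self_nonneg T

theorem re_inner_opAbs_sq_apply (T : H →L[ℂ] H) (x : H) :
    re ⟪(opAbs T ^ 2) x, x⟫_ℂ = ‖T x‖ ^ 2 := by
  rw [opAbs_sq, mul_apply_eq_comp, ContinuousLinearMap.star_eq_adjoint,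
    ContinuousLinearMap.adjoint_inner_left, inner_self_eq_norm_sq]

theorem stmt11_general (T : H →L[ℂ] H)
    (φ : ℝ → ℝ) (hφc : ContinuousOn φ (Ici 0)) (hφconv : ConvexOn ℝ (Ici 0) φ)
    (hφmono : MonotoneOn φ (Ici 0)) (hφ0 : φ 0 = 0) (α : ℝ) (hα : α ∈ Icc (0:ℝ) 1) :
    φ (numRad T ^ 2) ≤
      (α / 2) * φ (numRad (T * T)) +
      ‖(α / 4) • cfc φ (opAbs T ^ 2) + (1 - 3 * α / 4) • cfc φ (opAbs (star T) ^ 2)‖ := by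
  obtain ⟨hα0, hα1⟩ := hα
  set Op := (α / 4) • cfc φ (opAbs T ^ 2) + (1 - 3 * α / 4) • cfc φ (opAbs (star T) ^ 2)
  have hφw : 0 ≤ φ (numRad (T * T)) :=
    hφ0 ▸ hφmono self_mem_Ici (numRad_nonneg _) (numRad_nonneg _)
  refine apply_numRad_le (ψ := fun t => φ (t ^ 2))
    (hφc.comp (continuous_pow 2).continuousOn fun t _ => sq_nonneg t)
    (by rw [zero_pow two_ne_zero, hφ0]; positivity) fun x hx => ?_
  have hw := hφmono (norm_nonneg _) (numRad_nonneg _) (norm_inner_apply_le_numRad (T * T) hx)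
  have hjensen (S : H →L[ℂ] H) : φ (‖S x‖ ^ 2) ≤ re ⟪cfc φ (opAbs S ^ 2) x, x⟫_ℂ := by
    rw [← re_inner_opAbs_sq_apply]
    exact ContinuousLinearMap.apply_re_inner_le_re_inner_cfc (opAbs_sq_nonneg S) hφc hφconv
      hφmono hx
  calc φ (‖⟪T x, x⟫_ℂ‖ ^ 2)
      ≤ α / 2 * φ ‖⟪(T * T) x, x⟫_ℂ‖ + α / 4 * φ (‖T x‖ ^ 2)
          + (1 - 3 * α / 4) * φ (‖star T x‖ ^ 2) :=
        hφconv.apply_sq_le_of_sq_le_add_mul_div_two hφmono hα0 hα1 (norm_nonneg _)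
          (norm_nonneg _) (norm_nonneg _) (norm_nonneg _)
          (T.norm_inner_apply_le_norm_star_apply hx) (T.norm_inner_apply_sq_le hx)
    _ ≤ α / 2 * φ (numRad (T * T)) + (α / 4 * re ⟪cfc φ (opAbs T ^ 2) x, x⟫_ℂ
          + (1 - 3 * α / 4) * re ⟪cfc φ (opAbs (star T) ^ 2) x, x⟫_ℂ) := by
        rw [← add_assoc]
        gcongr
        · exact hjensen T
        · linarith
        · exact hjensen (star T)
    _ = α / 2 * φ (numRad (T * T)) + re ⟪Op x, x⟫_ℂ := by
        rw [ContinuousLinearMap.re_inner_smul_add_smul_apply]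
    _ ≤ α / 2 * φ (numRad (T * T)) + ‖Op‖ := by
        gcongr
        exact Op.re_inner_apply_le_opNorm hx

theorem stmt11 (T : H →L[ℂ] H)
    (φ : ℝ → ℝ) (hφc : ContinuousOn φ (Ici 0)) (hφconv : ConvexOn ℝ (Ici 0) φ)
    (hφmono : MonotoneOn φ (Ici 0)) (hφ0 : φ 0 = 0) (hφpos : ∀ t > 0, 0 < φ t)
    (hφtop : Tendsto φ atTop atTop) (α : ℝ) (hα : α ∈ Icc (0:ℝ) 1) :
    φ (numRad T ^ 2) ≤
      (α / 2) * φ (numRad (T * T)) +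
      ‖(α / 4) • cfc φ (opAbs T ^ 2) + (1 - 3 * α / 4) • cfc φ (opAbs (star T) ^ 2)‖ :=
  stmt11_general T φ hφc hφconv hφmono hφ0 α hα
end

section
/- Let T be a bounded linear operator on a complex Hilbert space H and φ an Orlicz function. Then φ(w(T)) ≤ (1/2)‖φ(|T|) + φ(|T*|)‖. -/
open scoped InnerProductSpace
open Set Filter

variable {H : Type*} [NormedAddCommGroup H] [InnerProductSpace ℂ H] [CompleteSpace H]

/-!
The key estimate is Kato's mixed Schwarz inequality `‖⟪T x, y⟫‖² ≤ ⟪|T| x, x⟫ ⟪|T*| y, y⟫`,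
which for `y = x` and AM–GM bounds `‖⟪T x, x⟫‖` by the mean of `⟪|T| x, x⟫` and `⟪|T*| x, x⟫`.
In place of the polar decomposition, write `T = T R D` with `D = |T| + ε` and `R = D⁻¹ ≥ 0`:
Cauchy–Schwarz for the positive form `⟪D ·, ·⟫` gives `‖⟪T x, y⟫‖² ≤ ⟪D x, x⟫ ⟪T R T* y, y⟫`, and
`T R T* ≤ |T*|` because `(T R T*)² = T (R |T|² R) T* ≤ T T*` and the square root is operator
monotone; then let `ε → 0`.

Applying the increasing convex `φ`, midpoint convexity and the operator Jensen inequality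
`φ ⟪C x, x⟫ ≤ ⟪φ(C) x, x⟫` for unit `x` (a supporting line of `φ` at `⟪C x, x⟫` lies below `φ` on
the spectrum of `C`) give `φ ‖⟪T x, x⟫‖ ≤ ½ ⟪(φ(|T|) + φ(|T*|)) x, x⟫ ≤ ½ ‖φ(|T|) + φ(|T*|)‖`, and
continuity of `φ` carries the bound over to the supremum `w(T)`.
-/

open ContinuousLinearMap RCLike Topology

section CStarAlgebra

variable {A : Type*} [CStarAlgebra A] [PartialOrder A] [StarOrderedRing A]

lemma mul_mul_star_le_sqrt_mul_star {a r : A} (hr : 0 ≤ r) (h : r * (star a * a) * r ≤ 1) :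
    a * r * star a ≤ CFC.sqrt (a * star a) := by
  have hconj : 0 ≤ a * r * star a := star_right_conjugate_nonneg hr a
  have hsq : a * r * star a * (a * r * star a) ≤ a * star a :=
    calc a * r * star a * (a * r * star a) = a * (r * (star a * a) * r) * star a := by
          simp only [mul_assoc]
      _ ≤ a * 1 * star a := star_right_conjugate_le_conjugate h a
      _ = a * star a := by rw [mul_one]
  calc a * r * star a = CFC.sqrt (a * r * star a * (a * r * star a)) :=
        (CFC.sqrt_mul_self _ hconj).symm
    _ ≤ CFC.sqrt (a * star a) := CFC.sqrt_le_sqrt _ _ hsq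

variable {a : A} {ε : ℝ}

lemma continuousOn_inv_add_spectrum (ha : 0 ≤ a) (hε : 0 < ε) :
    ContinuousOn (fun t : ℝ => (t + ε)⁻¹) (spectrum ℝ a) :=
  ContinuousOn.inv₀ (by fun_prop) fun t ht =>
    (add_pos_of_nonneg_of_pos (spectrum_nonneg_of_nonneg ha ht) hε).ne'

lemma cfc_inv_add_mul_add_algebraMap (ha : 0 ≤ a) (hε : 0 < ε) :
    cfc (fun t : ℝ => (t + ε)⁻¹) a * (a + algebraMap ℝ A ε) = 1 := by
  rw [← cfc_id' ℝ a, ← cfc_add_const ε (fun t => t) a, cfc_id' ℝ a,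
    ← cfc_mul _ _ a (continuousOn_inv_add_spectrum ha hε), ← cfc_const_one ℝ a]
  exact cfc_congr fun t ht =>
    inv_mul_cancel₀ (add_pos_of_nonneg_of_pos (spectrum_nonneg_of_nonneg ha ht) hε).ne'

lemma cfc_inv_add_mul_mul_self_mul_le_one (ha : 0 ≤ a) (hε : 0 < ε) :
    cfc (fun t : ℝ => (t + ε)⁻¹) a * (a * a) * cfc (fun t : ℝ => (t + ε)⁻¹) a ≤ 1 := by
  set g : ℝ → ℝ := fun t => (t + ε)⁻¹
  have hg := continuousOn_inv_add_spectrum ha hε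
  have hg1 : ContinuousOn (fun t => g t * t) (spectrum ℝ a) := hg.mul continuousOn_id
  have hcfc : cfc g a * (a * a) * cfc g a = cfc (fun t => g t * t * (g t * t)) a := by
    have hcomm : a * cfc g a = cfc g a * a := ((Commute.refl a).cfc_real g).eq.symm
    rw [cfc_mul _ _ a hg1 hg1, cfc_mul g (fun t => t) a hg, cfc_id' ℝ a, ← mul_assoc,
      mul_assoc _ a, hcomm]
  rw [hcfc]
  refine cfc_le_one _ _ fun t ht => ?_
  have ht0 := spectrum_nonneg_of_nonneg ha ht
  have h0 : 0 ≤ g t * t := by positivity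
  have h1 : g t * t ≤ 1 := by
    rw [inv_mul_le_one₀ (by positivity)]; linarith
  exact mul_le_one₀ h1 h0 h1

end CStarAlgebra

namespace ContinuousLinearMap

section RCLike

variable {𝕜 E : Type*} [RCLike 𝕜] [NormedAddCommGroup E] [InnerProductSpace 𝕜 E]

lemma re_inner_le_re_inner_of_le {S D : E →L[𝕜] E} (h : S ≤ D) (x : E) :
    re ⟪S x, x⟫_𝕜 ≤ re ⟪D x, x⟫_𝕜 := by
  have := ((le_def S D).1 h).re_inner_nonneg_left x
  rwa [sub_apply, inner_sub_left, map_sub, sub_nonneg] at this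

lemma re_inner_le_norm_of_norm_eq_one (D : E →L[𝕜] E) {x : E} (hx : ‖x‖ = 1) :
    re ⟪D x, x⟫_𝕜 ≤ ‖D‖ :=
  calc re ⟪D x, x⟫_𝕜 ≤ ‖D x‖ * ‖x‖ := re_inner_le_norm _ _
    _ ≤ ‖D‖ * ‖x‖ * ‖x‖ := by gcongr; exact le_opNorm D x
    _ = ‖D‖ := by rw [hx, mul_one, mul_one]

end RCLike

variable {E : Type*} [NormedAddCommGroup E] [InnerProductSpace ℂ E]

lemma re_inner_algebraMap_apply (r : ℝ) (x : E) :
    re ⟪(algebraMap ℝ (E →L[ℂ] E) r) x, x⟫_ℂ = r * ‖x‖ ^ 2 := by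
  rw [Algebra.algebraMap_eq_smul_one, smul_apply, one_apply_eq_self,
    real_smul_eq_coe_smul (K := ℂ), inner_smul_left, conj_ofReal, re_ofReal_mul,
    inner_self_eq_norm_sq]

variable [CompleteSpace E]

lemma norm_inner_sq_le_of_nonneg {D : E →L[ℂ] E} (hD : 0 ≤ D) (u v : E) :
    ‖⟪D u, v⟫_ℂ‖ ^ 2 ≤ re ⟪D u, u⟫_ℂ * re ⟪D v, v⟫_ℂ := by
  set B := CFC.sqrt D
  have hB : IsSelfAdjoint B := IsSelfAdjoint.of_nonneg (CFC.sqrt_nonneg D)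
  have hBB : ∀ w z, ⟪D w, z⟫_ℂ = ⟪B w, B z⟫_ℂ := fun w z => by
    rw [← CFC.sqrt_mul_sqrt_self D hD]
    exact hB.isSymmetric (B w) z
  have hnorm : ∀ w, re ⟪D w, w⟫_ℂ = ‖B w‖ ^ 2 := fun w => by
    rw [hBB, inner_self_eq_norm_sq]
  rw [hBB, hnorm, hnorm, ← mul_pow]
  gcongr
  exact norm_inner_le_norm _ _

lemma affine_le_re_inner_cfc {C : E →L[ℂ] E} (hC : IsSelfAdjoint C) {f : ℝ → ℝ}
    (hf : ContinuousOn f (spectrum ℝ C)) {a b : ℝ} (hab : ∀ t ∈ spectrum ℝ C, a * t + b ≤ f t)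
    (x : E) : a * re ⟪C x, x⟫_ℂ + b * ‖x‖ ^ 2 ≤ re ⟪cfc f C x, x⟫_ℂ := by
  have hle : cfc (fun t => a * t + b) C ≤ cfc f C := cfc_mono hab
  rw [cfc_add_const b (fun t => a * t) C, cfc_const_mul_id a C] at hle
  have := re_inner_le_re_inner_of_le hle x
  rwa [add_apply, inner_add_left, map_add, re_inner_algebraMap_apply, smul_apply,
    real_smul_eq_coe_smul (K := ℂ), inner_smul_left, conj_ofReal, re_ofReal_mul] at this

end ContinuousLinearMap

theorem ConvexOn.add_rightDeriv_mul_sub_le {S : Set ℝ} {f : ℝ → ℝ} {x y : ℝ}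
    (hf : ConvexOn ℝ S f) (hx : x ∈ interior S) (hy : y ∈ S) :
    f x + derivWithin f (Ioi x) x * (y - x) ≤ f y := by
  rcases lt_trichotomy y x with hyx | rfl | hxy
  · have hslope : slope f y x ≤ derivWithin f (Ioi x) x :=
      (hf.slope_le_leftDeriv_of_mem_interior hy hx hyx).trans
        (hf.leftDeriv_le_rightDeriv_of_mem_interior hx)
    rw [slope_def_field, div_le_iff₀ (sub_pos.2 hyx)] at hslope
    linarith
  · simp
  · have hslope := hf.rightDeriv_le_slope_of_mem_interior hx hy hxy
    rw [slope_def_field, le_div_iff₀ (sub_pos.2 hxy)] at hslope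
    linarith

theorem ConvexOn.exists_affine_le_of_monotoneOn_Ici {φ : ℝ → ℝ}
    (hconv : ConvexOn ℝ (Ici 0) φ) (hmono : MonotoneOn φ (Ici 0)) {t₀ : ℝ} (ht₀ : 0 ≤ t₀) :
    ∃ a b : ℝ, a * t₀ + b = φ t₀ ∧ ∀ t ∈ Ici (0 : ℝ), a * t + b ≤ φ t := by
  rcases ht₀.eq_or_lt with rfl | hpos
  -- at the endpoint the right derivative may be `-∞`; monotonicity gives a horizontal line
  · exact ⟨0, φ 0, by ring, fun t ht => by simpa using hmono (mem_Ici.2 le_rfl) ht ht⟩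
  · refine ⟨derivWithin φ (Ioi t₀) t₀, φ t₀ - derivWithin φ (Ioi t₀) t₀ * t₀, by ring,
      fun t ht => ?_⟩
    have := hconv.add_rightDeriv_mul_sub_le (by rwa [interior_Ici]) ht
    linarith

theorem ContinuousLinearMap.map_re_inner_le_re_inner_cfc {E : Type*} [NormedAddCommGroup E]
    [InnerProductSpace ℂ E] [CompleteSpace E] {φ : ℝ → ℝ} (hc : ContinuousOn φ (Ici 0))
    (hconv : ConvexOn ℝ (Ici 0) φ) (hmono : MonotoneOn φ (Ici 0)) {C : E →L[ℂ] E} (hC : 0 ≤ C)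
    {x : E} (hx : ‖x‖ = 1) : φ (re ⟪C x, x⟫_ℂ) ≤ re ⟪cfc φ C x, x⟫_ℂ := by
  have hspec : spectrum ℝ C ⊆ Ici 0 := fun t ht => spectrum_nonneg_of_nonneg hC ht
  obtain ⟨a, b, heq, hle⟩ := hconv.exists_affine_le_of_monotoneOn_Ici hmono
    (((nonneg_iff_isPositive C).1 hC).re_inner_nonneg_left x)
  have := affine_le_re_inner_cfc (IsSelfAdjoint.of_nonneg hC) (hc.mono hspec)
    (fun t ht => hle t (hspec ht)) x
  rwa [hx, one_pow, mul_one, heq] at this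

lemma opAbs_nonneg (T : H →L[ℂ] H) : 0 ≤ opAbs T := CFC.sqrt_nonneg _

lemma opAbs_mul_self (T : H →L[ℂ] H) : opAbs T * opAbs T = star T * T := CFC.abs_mul_abs T

lemma re_inner_opAbs_nonneg (T : H →L[ℂ] H) (x : H) : 0 ≤ re ⟪opAbs T x, x⟫_ℂ :=
  ((nonneg_iff_isPositive _).1 (opAbs_nonneg T)).re_inner_nonneg_left x

lemma norm_inner_sq_le_re_inner_opAbs_add_mul (T : H →L[ℂ] H) {ε : ℝ} (hε : 0 < ε) (x y : H) :
    ‖⟪T x, y⟫_ℂ‖ ^ 2 ≤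
      (re ⟪opAbs T x, x⟫_ℂ + ε * ‖x‖ ^ 2) * re ⟪opAbs (star T) y, y⟫_ℂ := by
  have hA := opAbs_nonneg T
  set R := cfc (fun t : ℝ => (t + ε)⁻¹) (opAbs T)
  set D := opAbs T + algebraMap ℝ (H →L[ℂ] H) ε
  have hR : 0 ≤ R := cfc_nonneg fun t ht =>
    inv_nonneg.2 (by linarith [spectrum_nonneg_of_nonneg hA ht])
  have hRsa : IsSelfAdjoint R := .of_nonneg hR
  have hD : 0 ≤ D := add_nonneg hA (algebraMap_nonneg _ hε.le)
  have hRD : ∀ v, R (D v) = v := fun v => congr($(cfc_inv_add_mul_add_algebraMap hA hε) v)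
  have hTR : T * R * star T ≤ opAbs (star T) := by
    have := cfc_inv_add_mul_mul_self_mul_le_one hA hε
    rw [opAbs_mul_self] at this
    simpa only [opAbs, star_star] using mul_mul_star_le_sqrt_mul_star hR this
  set z := R (star T y)
  have hz : ⟪T x, y⟫_ℂ = ⟪D x, z⟫_ℂ :=
    calc ⟪T x, y⟫_ℂ = ⟪T (R (D x)), y⟫_ℂ := by rw [hRD]
      _ = ⟪R (D x), star T y⟫_ℂ := by rw [star_eq_adjoint, adjoint_inner_right]
      _ = ⟪D x, z⟫_ℂ := hRsa.isSymmetric _ _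
  have hzz : ⟪D z, z⟫_ℂ = ⟪(T * R * star T) y, y⟫_ℂ :=
    calc ⟪D z, z⟫_ℂ = ⟪R (D z), star T y⟫_ℂ := (hRsa.isSymmetric _ _).symm
      _ = ⟪z, star T y⟫_ℂ := by rw [hRD]
      _ = ⟪T z, y⟫_ℂ := by rw [star_eq_adjoint, adjoint_inner_right]
  have hDx : re ⟪D x, x⟫_ℂ = re ⟪opAbs T x, x⟫_ℂ + ε * ‖x‖ ^ 2 := by
    rw [add_apply, inner_add_left, map_add, re_inner_algebraMap_apply]
  calc ‖⟪T x, y⟫_ℂ‖ ^ 2 ≤ re ⟪D x, x⟫_ℂ * re ⟪D z, z⟫_ℂ := hz ▸ norm_inner_sq_le_of_nonneg hD x z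
    _ ≤ (re ⟪opAbs T x, x⟫_ℂ + ε * ‖x‖ ^ 2) * re ⟪opAbs (star T) y, y⟫_ℂ := by
      rw [← hDx, hzz]
      exact mul_le_mul_of_nonneg_left (re_inner_le_re_inner_of_le hTR y)
        (((nonneg_iff_isPositive D).1 hD).re_inner_nonneg_left x)

theorem norm_inner_sq_le_re_inner_opAbs_mul (T : H →L[ℂ] H) (x y : H) :
    ‖⟪T x, y⟫_ℂ‖ ^ 2 ≤ re ⟪opAbs T x, x⟫_ℂ * re ⟪opAbs (star T) y, y⟫_ℂ := by
  set a := re ⟪opAbs T x, x⟫_ℂ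
  set c := re ⟪opAbs (star T) y, y⟫_ℂ
  have hlim : Tendsto (fun ε => (a + ε * ‖x‖ ^ 2) * c) (𝓝[>] 0) (𝓝 ((a + 0 * ‖x‖ ^ 2) * c)) :=
    (Continuous.tendsto (by fun_prop) 0).mono_left nhdsWithin_le_nhds
  rw [zero_mul, add_zero] at hlim
  exact ge_of_tendsto hlim (eventually_nhdsWithin_of_forall fun ε hε =>
    norm_inner_sq_le_re_inner_opAbs_add_mul T hε x y)

theorem norm_inner_self_le_re_inner_opAbs_add (T : H →L[ℂ] H) (x : H) :
    ‖⟪T x, x⟫_ℂ‖ ≤ (re ⟪opAbs T x, x⟫_ℂ + re ⟪opAbs (star T) x, x⟫_ℂ) / 2 := by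
  nlinarith [norm_inner_sq_le_re_inner_opAbs_mul T x x, norm_nonneg ⟪T x, x⟫_ℂ,
    re_inner_opAbs_nonneg T x, re_inner_opAbs_nonneg (star T) x,
    sq_nonneg (re ⟪opAbs T x, x⟫_ℂ - re ⟪opAbs (star T) x, x⟫_ℂ)]

theorem map_numRad_le {E : Type*} [NormedAddCommGroup E] [InnerProductSpace ℂ E] {φ : ℝ → ℝ}
    (hc : ContinuousOn φ (Ici 0)) (T : E →L[ℂ] E) {c : ℝ} (h0 : φ 0 ≤ c)
    (h : ∀ x : E, ‖x‖ = 1 → φ ‖⟪T x, x⟫_ℂ‖ ≤ c) : φ (numRad T) ≤ c := by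
  set K := Ici 0 ∩ φ ⁻¹' Iic c
  have hK : IsClosed K := hc.preimage_isClosed_of_isClosed isClosed_Ici isClosed_Iic
  suffices numRad T ∈ K from this.2
  rcases isEmpty_or_nonempty {x : E // ‖x‖ = 1} with hE | hE
  · rw [numRad, Real.iSup_of_isEmpty]
    exact ⟨mem_Ici.2 le_rfl, h0⟩
  · have hbdd : BddAbove (range fun x : {x : E // ‖x‖ = 1} => ‖⟪T x, x⟫_ℂ‖) := by
      refine ⟨‖T‖, ?_⟩
      rintro _ ⟨⟨x, hx⟩, rfl⟩
      calc ‖⟪T x, x⟫_ℂ‖ ≤ ‖T x‖ * ‖x‖ := norm_inner_le_norm _ _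
        _ ≤ ‖T‖ * ‖x‖ * ‖x‖ := by gcongr; exact T.le_opNorm x
        _ = ‖T‖ := by rw [hx, mul_one, mul_one]
    have hsub : range (fun x : {x : E // ‖x‖ = 1} => ‖⟪T x, x⟫_ℂ‖) ⊆ K := by
      rintro _ ⟨x, rfl⟩
      exact ⟨norm_nonneg _, h x x.2⟩
    exact hK.closure_subset_iff.2 hsub (csSup_mem_closure (range_nonempty _) hbdd)

theorem stmt15_general (T : H →L[ℂ] H)
    (φ : ℝ → ℝ) (hφc : ContinuousOn φ (Ici 0)) (hφconv : ConvexOn ℝ (Ici 0) φ)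
    (hφmono : MonotoneOn φ (Ici 0)) (hφ0 : φ 0 = 0) :
    φ (numRad T) ≤ (1 / 2) * ‖cfc φ (opAbs T) + cfc φ (opAbs (star T))‖ := by
  refine map_numRad_le hφc T (by rw [hφ0]; positivity) fun x hx => ?_
  set a := re ⟪opAbs T x, x⟫_ℂ
  set c := re ⟪opAbs (star T) x, x⟫_ℂ
  have ha : 0 ≤ a := re_inner_opAbs_nonneg T x
  have hc : 0 ≤ c := re_inner_opAbs_nonneg (star T) x
  have hmid : φ ((a + c) / 2) ≤ (φ a + φ c) / 2 := by
    have := hφconv.2 ha hc (by norm_num : (0 : ℝ) ≤ 1 / 2) (by norm_num : (0 : ℝ) ≤ 1 / 2)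
      (by norm_num)
    simp only [smul_eq_mul] at this
    calc φ ((a + c) / 2) = φ (1 / 2 * a + 1 / 2 * c) := by ring_nf
      _ ≤ 1 / 2 * φ a + 1 / 2 * φ c := this
      _ = (φ a + φ c) / 2 := by ring
  calc φ ‖⟪T x, x⟫_ℂ‖ ≤ φ ((a + c) / 2) :=
        hφmono (norm_nonneg _) (by simp only [mem_Ici]; linarith)
          (norm_inner_self_le_re_inner_opAbs_add T x)
    _ ≤ (re ⟪cfc φ (opAbs T) x, x⟫_ℂ + re ⟪cfc φ (opAbs (star T)) x, x⟫_ℂ) / 2 := by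
        grw [hmid, map_re_inner_le_re_inner_cfc hφc hφconv hφmono (opAbs_nonneg T) hx,
          map_re_inner_le_re_inner_cfc hφc hφconv hφmono (opAbs_nonneg (star T)) hx]
    _ = re ⟪(cfc φ (opAbs T) + cfc φ (opAbs (star T))) x, x⟫_ℂ / 2 := by
        rw [add_apply, inner_add_left, map_add]
    _ ≤ 1 / 2 * ‖cfc φ (opAbs T) + cfc φ (opAbs (star T))‖ := by
        linarith [re_inner_le_norm_of_norm_eq_one (cfc φ (opAbs T) + cfc φ (opAbs (star T))) hx]

theorem stmt15 (T : H →L[ℂ] H)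
    (φ : ℝ → ℝ) (hφc : ContinuousOn φ (Ici 0)) (hφconv : ConvexOn ℝ (Ici 0) φ)
    (hφmono : MonotoneOn φ (Ici 0)) (hφ0 : φ 0 = 0) (hφpos : ∀ t > 0, 0 < φ t)
    (hφtop : Tendsto φ atTop atTop) :
    φ (numRad T) ≤ (1 / 2) * ‖cfc φ (opAbs T) + cfc φ (opAbs (star T))‖ :=
  stmt15_general T φ hφc hφconv hφmono hφ0
end
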